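/- Let a, b ∈ ℝ with 0 < a < 1 and 0 < b < 1, let 1 ≤ p < ∞, and let x_0, ε, ε' ∈ ℝ^n. Define x_t = √a · x_0 + √(1 − a) · ε, x_{t'} = √b · x_0 + √(1 − b) · ε, and the DDIM-predicted point x'_{t'} = (√b/√a) · ( x_t − ( √(1 − a) − (√a/√b) · √(1 − b) ) · ε' ). Then the ℓ_p distance between the groundtruth point and the predicted point satisfies ‖x_{t'} − x'_{t'}‖_p = | ( √(1 − b) · √a − √(1 − a) · √b ) / √a | · ‖ε − ε'‖_p. In particular, up to the fixed positive scalar coefficient | ( √(1 − b) √a − √(1 − a) √b ) / √a | (which does not depend on x_0, ε, or ε'), the distance d_{t'} = ‖x_{t'} − x'_{t'}‖_p equals the quantity ‖ε − ε'‖_p. -/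

import Mathlib

open scoped ENNReal

/-- In DDIM notation `α = √ᾱ_t`, `β = √ᾱ_{t'}`, `σ = √(1 - ᾱ_t)`, `τ = √(1 - ᾱ_{t'})`. -/
theorem ddim_step_error_eq_smul_sub {E : Type*} [AddCommGroup E] [Module ℝ E]
    {α β σ τ : ℝ} (hα : α ≠ 0) (hβ : β ≠ 0) (x₀ ε ε' : E) :
    (β • x₀ + τ • ε) - (β / α) • ((α • x₀ + σ • ε) - (σ - α / β * τ) • ε') =
      ((τ * α - σ * β) / α) • (ε - ε') := by
  match_scalars <;> field_simp <;> ring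

theorem ddim_prediction_error_lp_norm_general
    (n : ℕ) (p : ℝ≥0∞) [Fact (1 ≤ p)]
    (a b : ℝ)
    (ha0 : 0 < a) (hb0 : 0 < b)
    (x₀ ε ε' : PiLp p (fun _ : Fin n => ℝ))
    (xt xt' xt'pred : PiLp p (fun _ : Fin n => ℝ))
    (hxt : xt = Real.sqrt a • x₀ + Real.sqrt (1 - a) • ε)
    (hxt' : xt' = Real.sqrt b • x₀ + Real.sqrt (1 - b) • ε)
    (hpred : xt'pred = (Real.sqrt b / Real.sqrt a) •
      (xt - (Real.sqrt (1 - a) - (Real.sqrt a / Real.sqrt b) * Real.sqrt (1 - b)) • ε')) :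
    ‖xt' - xt'pred‖ =
      |(Real.sqrt (1 - b) * Real.sqrt a - Real.sqrt (1 - a) * Real.sqrt b) / Real.sqrt a| *
        ‖ε - ε'‖ := by
  subst hxt hxt' hpred
  rw [ddim_step_error_eq_smul_sub (Real.sqrt_pos.2 ha0).ne' (Real.sqrt_pos.2 hb0).ne',
    norm_smul, Real.norm_eq_abs]

/-- The ℓ_p distance (1 ≤ p < ∞) between the groundtruth point `x_{t'}` and
the deterministic DDIM-predicted point `x'_{t'}` equals
`|(√(1−b)√a − √(1−a)√b)/√a| · ‖ε − ε'‖_p`, a fixed scalar coefficient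
(independent of `x₀`, `ε`, `ε'`) times the PIA attack metric `‖ε − ε'‖_p`.
Here `a = ᾱ_t` and `b = ᾱ_{t'}`. -/
theorem ddim_prediction_error_lp_norm
    (n : ℕ) (p : ℝ≥0∞) [Fact (1 ≤ p)] (hp : p ≠ ⊤)
    (a b : ℝ)
    (ha0 : 0 < a) (ha1 : a < 1) (hb0 : 0 < b) (hb1 : b < 1)
    (x₀ ε ε' : PiLp p (fun _ : Fin n => ℝ))
    (xt xt' xt'pred : PiLp p (fun _ : Fin n => ℝ))
    (hxt : xt = Real.sqrt a • x₀ + Real.sqrt (1 - a) • ε)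
    (hxt' : xt' = Real.sqrt b • x₀ + Real.sqrt (1 - b) • ε)
    (hpred : xt'pred = (Real.sqrt b / Real.sqrt a) •
      (xt - (Real.sqrt (1 - a) - (Real.sqrt a / Real.sqrt b) * Real.sqrt (1 - b)) • ε')) :
    ‖xt' - xt'pred‖ =
      |(Real.sqrt (1 - b) * Real.sqrt a - Real.sqrt (1 - a) * Real.sqrt b) / Real.sqrt a| *
        ‖ε - ε'‖ :=
  ddim_prediction_error_lp_norm_general n p a b ha0 hb0 x₀ ε ε' xt xt' xt'pred hxt hxt' hpred
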